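/- arXiv:2509.18724 — 5 statements merged into one kernel-verified Lean document; each statement's English description precedes it below -/
import Mathlib

section
/- Let S be a commutative periodic semigroup. For any elements s_1,…,s_k ∈ S, the unique idempotent of the cyclic subsemigroup generated by s_1 + ⋯ + s_k equals the sum of the idempotents of the cyclic subsemigroups generated by the s_i; that is, e(s_1 + ⋯ + s_k) = e(s_1) + ⋯ + e(s_k). -/
namespace ZS

variable (S : Type*) [AddCommSemigroup S]

/-- `nsmul' n x = (n+1)·x`, iterated addition in a semigroup. -/
def nsmul' : ℕ → S → S
  | 0, x => x
  | n + 1, x => x + nsmul' n x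

/-- The cyclic subsemigroup `⟨x⟩ = {x, 2x, 3x, …}` generated by `x`. -/
def cyc (x : S) : Set S := Set.range fun n => nsmul' S n x

/-- `x` is periodic if `⟨x⟩` is finite. -/
def IsPeriodicElem (x : S) : Prop := (cyc S x).Finite

/-- A semigroup is periodic if every element is periodic. -/
def IsPeriodicSemigroup : Prop := ∀ x : S, IsPeriodicElem S x

/-- `ρ(x)`: the least `m ≥ 1` such that `m·x` is idempotent (equivalently `m·x = e(x)`). -/
noncomputable def rho (x : S) : ℕ :=
  sInf {n : ℕ | nsmul' S n x + nsmul' S n x = nsmul' S n x} + 1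

/-- `e(x)`: the unique idempotent of the finite cyclic semigroup `⟨x⟩`. -/
noncomputable def eIdem (x : S) : S :=
  nsmul' S (sInf {n : ℕ | nsmul' S n x + nsmul' S n x = nsmul' S n x}) x

/-- The period of a (periodic) element `x`: the least `n > 0` with `(m+n)x = mx` for some `m`. -/
noncomputable def period (x : S) : ℕ :=
  sInf {n : ℕ | 0 < n ∧ ∃ m : ℕ, nsmul' S (m + n) x = nsmul' S m x}

/-- The index of a (periodic) element `x`: the least `k ≥ 1` with `kx = tx` for some `t ≠ k`. -/
noncomputable def indexOf (x : S) : ℕ :=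
  sInf {k : ℕ | ∃ t : ℕ, t ≠ k ∧ nsmul' S k x = nsmul' S t x} + 1

/-- `exp(S)`: the lcm of the periods of the elements of `S`, described as the least positive
common multiple of all the periods. -/
noncomputable def expS : ℕ := sInf {n : ℕ | 0 < n ∧ ∀ x : S, period S x ∣ n}

/-- `K` is a splitting field for exponent `n`: it contains exactly `n` `n`-th roots of unity. -/
def SplitField (K : Type*) [Field K] (n : ℕ) : Prop := Set.ncard {ζ : K | ζ ^ n = 1} = n

/-- Green's preorder `a ≼_𝓗 b`. -/
def gLe (a b : S) : Prop := a = b ∨ ∃ c : S, a = b + c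

/-- Green's congruence `a 𝓗 b`. -/
def gEq (a b : S) : Prop := gLe S a b ∧ gLe S b a

/-- `a ≺_𝓗 b`. -/
def gLt (a b : S) : Prop := gLe S a b ∧ ¬ gLe S b a

/-- The Green class `H_a`. -/
def HClass (a : S) : Set S := {x : S | gEq S x a}

/-- The stabilizer `St(H_a)` of the Green class of `a`. -/
def stab (a : S) : Set S := {c : S | ∀ x ∈ HClass S a, c + x ∈ HClass S a}

theorem gLe_trans {a b c : S} (h1 : gLe S a b) (h2 : gLe S b c) : gLe S a c := by
  rcases h1 with rfl | ⟨u, rfl⟩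
  · exact h2
  · rcases h2 with rfl | ⟨v, rfl⟩
    · exact Or.inr ⟨u, rfl⟩
    · exact Or.inr ⟨v + u, by rw [add_assoc]⟩

theorem gLe_add_right {a b : S} (x : S) (h : gLe S a b) : gLe S (a + x) (b + x) := by
  rcases h with rfl | ⟨c, rfl⟩
  · exact Or.inl rfl
  · exact Or.inr ⟨c, by rw [add_right_comm]⟩

theorem gEq_add {w x y z : S} (h1 : gEq S w x) (h2 : gEq S y z) : gEq S (w + y) (x + z) := by
  have k1 : gLe S (w + y) (x + y) := gLe_add_right S y h1.1
  have k2 : gLe S (x + y) (x + z) := by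
    have h := gLe_add_right S x h2.1
    rwa [add_comm z x, add_comm y x] at h
  have k3 : gLe S (x + z) (w + z) := gLe_add_right S z h1.2
  have k4 : gLe S (w + z) (w + y) := by
    have h := gLe_add_right S w h2.2
    rwa [add_comm z w, add_comm y w] at h
  exact ⟨gLe_trans S k1 k2, gLe_trans S k3 k4⟩

/-- Green's congruence as an additive congruence. -/
def greenCon : AddCon S where
  r a b := gEq S a b
  iseqv := ⟨fun _ => ⟨Or.inl rfl, Or.inl rfl⟩, fun h => ⟨h.2, h.1⟩,
    fun h1 h2 => ⟨gLe_trans S h1.1 h2.1, gLe_trans S h2.2 h1.2⟩⟩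
  add' h1 h2 := gEq_add S h1 h2

/-- The quotient semigroup `S/𝓗`. -/
abbrev GQuot := (greenCon S).Quotient

/-- The canonical epimorphism `S → S/𝓗`, `a ↦ ā`. -/
def gq (a : S) : GQuot S := (a : (greenCon S).Quotient)

/-- The sum of a sequence (multiset) of elements of `S`, computed in `WithZero S`
(the empty sequence having sum the adjoined zero). -/
def msum (T : Multiset S) : WithZero S := (T.map fun x => (x : WithZero S)).sum

/-- A sequence over a commutative semigroup is (additively) reducible if some proper
(possibly empty) subsequence has the same sum; the empty sequence has sum the identity of `S`,
when `S` has one. -/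
def IsReducible (T : Multiset S) : Prop :=
  (∃ T' : Multiset S, T' ≤ T ∧ T' ≠ T ∧ T' ≠ 0 ∧ msum S T' = msum S T) ∨
    (T ≠ 0 ∧ ∃ z : S, msum S T = ↑z ∧ ∀ s : S, z + s = s)

/-- The Davenport constant `D(S)` of a commutative semigroup. -/
noncomputable def Dav : ℕ∞ :=
  sInf {n : ℕ∞ | ∀ T : Multiset S, (T.card : ℕ∞) ≥ n → IsReducible S T}

/-- The relative Davenport constant `D_a(S)`: the largest length of an additively
irreducible sequence with sum `a`. -/
noncomputable def Drel (a : S) : ℕ∞ :=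
  sSup {n : ℕ∞ | ∃ T : Multiset S,
    T ≠ 0 ∧ ¬ IsReducible S T ∧ msum S T = ↑a ∧ n = (T.card : ℕ∞)}

/-- The Erdős–Burgess constant `I(S)`: the smallest `ℓ` such that every sequence over `S` of
length (at least) `ℓ` has a nonempty subsequence with idempotent sum. -/
noncomputable def EB : ℕ∞ :=
  sInf {n : ℕ∞ | ∀ T : Multiset S, (T.card : ℕ∞) ≥ n →
    ∃ T' : Multiset S, T' ≤ T ∧ T' ≠ 0 ∧ ∃ x : S, msum S T' = ↑x ∧ x + x = x}

/-- The Davenport constant of a (semigroup which is a) group: the smallest `ℓ` such that every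
sequence of length (at least) `ℓ` has a nonempty subsequence whose sum is the identity element. -/
noncomputable def DavGrpSet : ℕ∞ :=
  sInf {n : ℕ∞ | ∀ T : Multiset S, (T.card : ℕ∞) ≥ n →
    ∃ T' : Multiset S, T' ≤ T ∧ T' ≠ 0 ∧ ∃ z : S, msum S T' = ↑z ∧ ∀ x : S, z + x = x}

/-- The Davenport constant of a finite abelian group. -/
noncomputable def DavG (G : Type*) [AddCommMonoid G] : ℕ∞ :=
  sInf {n : ℕ∞ | ∀ T : Multiset G, (T.card : ℕ∞) ≥ n →
    ∃ T' : Multiset G, T' ≤ T ∧ T' ≠ 0 ∧ T'.sum = 0}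

/-- `ψ(a)`: the largest length of a strictly ascending chain of principal ideals starting at
`(a)`. -/
noncomputable def psi (a : S) : ℕ∞ :=
  sSup {n : ℕ∞ | ∃ ℓ : ℕ, n = (ℓ : ℕ∞) ∧
    ∃ c : ℕ → S, c 0 = a ∧ ∀ i < ℓ, gLt S (c i) (c (i + 1))}

/-- `Ψ(S)`: the largest length of a strictly ascending chain of principal ideals of `S`. -/
noncomputable def PsiS : ℕ∞ := ⨆ a : S, psi S a

/-- A subset of a semigroup which is a subgroup: closed under addition, with an identity
and inverses. -/
def IsSubgroupSet (T : Set S) : Prop :=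
  (∀ x ∈ T, ∀ y ∈ T, x + y ∈ T) ∧
    ∃ z ∈ T, (∀ x ∈ T, z + x = x) ∧ ∀ x ∈ T, ∃ y ∈ T, x + y = z

open Classical in
/-- `ε_a`: `0` if `⟨a⟩` is a group, `1` otherwise. -/
noncomputable def eps (a : S) : ℕ∞ := if IsSubgroupSet S (cyc S a) then 0 else 1

/-- The Schützenberger maps on the Green class `H_a`: maps `x ↦ c + x` for `c ∈ St(H_a)`. -/
def GammaSet (a : S) : Set (↥(HClass S a) → ↥(HClass S a)) :=
  {f | ∃ c ∈ stab S a, ∀ x : ↥(HClass S a), (↑(f x) : S) = c + ↑x}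

/-- The Schützenberger group `Γ(H_a)` (as a type; it is empty when `St(H_a) = ∅`). -/
def Gamma (a : S) : Type _ := ↥(GammaSet S a)

instance (a : S) : Add (Gamma S a) :=
  ⟨fun f g => ⟨f.1 ∘ g.1, by
    obtain ⟨c, hc, hfc⟩ := f.2
    obtain ⟨d, hd, hgd⟩ := g.2
    refine ⟨c + d, fun x hx => by rw [add_assoc]; exact hc _ (hd x hx), fun x => ?_⟩
    show (↑(f.1 (g.1 x)) : S) = c + d + ↑x
    rw [hfc (g.1 x), hgd x, add_assoc]⟩⟩

instance (a : S) : AddCommSemigroup (Gamma S a) where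
  add_assoc f g h := Subtype.ext rfl
  add_comm f g := by
    obtain ⟨c, hc, hfc⟩ := f.2
    obtain ⟨d, hd, hgd⟩ := g.2
    apply Subtype.ext
    funext x
    apply Subtype.ext
    show (↑(f.1 (g.1 x)) : S) = ↑(g.1 (f.1 x))
    rw [hfc (g.1 x), hgd x, hgd (f.1 x), hfc x, add_left_comm]

/-- `St(H_a)` as a subsemigroup of `S`. -/
def stabSub (a : S) : AddSubsemigroup S where
  carrier := stab S a
  add_mem' := fun {c d} hc hd x hx => by rw [add_assoc]; exact hc _ (hd x hx)

/-- The canonical surjection `π_a : St(H_a) → Γ(H_a)`, `c ↦ γ_c`. -/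
def gammaMap (a : S) (c : ↥(stabSub S a)) : Gamma S a :=
  ⟨fun x => ⟨(↑c : S) + ↑x, c.2 ↑x x.2⟩, ⟨↑c, c.2, fun _ => rfl⟩⟩

/-- The semigroup algebra `R[X;S]` of a commutative semigroup, realized inside the monoid
algebra of the monoid obtained from `S` by adjoining an identity element. -/
abbrev SAlg (R : Type*) [CommRing R] (S : Type*) [AddCommSemigroup S] :=
  AddMonoidAlgebra R (WithZero S)

/-- The monomial `r·X^s` of the semigroup algebra. -/
noncomputable def Xm (R : Type*) [CommRing R] {S : Type*} [AddCommSemigroup S] (s : S) (r : R) :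
    SAlg R S := AddMonoidAlgebra.single (↑s) r

/-- The factor `X^s - a·X^{e(s)}` of the semigroup algebra. -/
noncomputable def facX (R : Type*) [CommRing R] {S : Type*} [AddCommSemigroup S]
    (s : S) (a : R) : SAlg R S := Xm R s 1 - Xm R (eIdem S s) a

/-- The invariant `d(S,R)`: the supremum of all `ℓ` such that some sequence `s_1,…,s_ℓ` over
`S` satisfies `(X^{s_1} - a_1 X^{e(s_1)}) ⋯ (X^{s_ℓ} - a_ℓ X^{e(s_ℓ)}) ≠ 0` in `R[X;S]` for all
nonzero `a_1, …, a_ℓ ∈ R`. -/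
noncomputable def dd (R : Type*) [CommRing R] (S : Type*) [AddCommSemigroup S] : ℕ∞ :=
  sSup {n : ℕ∞ | ∃ ℓ : ℕ, n = (ℓ : ℕ∞) ∧ ∃ s : Fin ℓ → S,
    ∀ a : Fin ℓ → R, (∀ i, a i ≠ 0) → ∏ i, facX R (s i) (a i) ≠ 0}

/-- `Λ(S)`: the minimum over all generating sets `A` of `S` of `1 + Σ_{a∈A} (ρ(a)-1)`. -/
noncomputable def Lam (S : Type*) [AddCommSemigroup S] : ℕ :=
  sInf {n : ℕ | ∃ A : Finset S,
    AddSubsemigroup.closure (↑A : Set S) = ⊤ ∧ n = 1 + ∑ a ∈ A, (rho S a - 1)}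

/-- An elementary semigroup: an ideal extension of a nilsemigroup `N` by a group with zero
`G ∪ {∞}`. -/
def IsElementary : Prop :=
  ∃ G N : Set S, G ∪ N = Set.univ ∧ Disjoint G N ∧ IsSubgroupSet S G ∧
    (∀ x ∈ N, ∀ s : S, s + x ∈ N) ∧
    ∃ z ∈ N, (∀ s : S, s + z = z) ∧ ∀ x ∈ N, ∃ n : ℕ, nsmul' S n x = z


section Aux

variable {S₀ : Type*} [AddCommSemigroup S₀]

theorem nsmul'_succ' (n : ℕ) (x : S₀) : nsmul' S₀ (n + 1) x = x + nsmul' S₀ n x := rfl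

theorem nsmul'_add_nsmul' (m n : ℕ) (x : S₀) :
    nsmul' S₀ m x + nsmul' S₀ n x = nsmul' S₀ (m + n + 1) x := by
  induction m with
  | zero => simp only [Nat.zero_add]; rfl
  | succ m ih =>
    rw [nsmul'_succ', add_assoc, ih, ← nsmul'_succ']
    congr 1
    omega

theorem nsmul'_add_dist (n : ℕ) (x y : S₀) :
    nsmul' S₀ n (x + y) = nsmul' S₀ n x + nsmul' S₀ n y := by
  induction n with
  | zero => rfl
  | succ n ih => rw [nsmul'_succ', ih, nsmul'_succ', nsmul'_succ', add_add_add_comm]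

theorem nsmul'_nsmul' (a b : ℕ) (x : S₀) :
    nsmul' S₀ a (nsmul' S₀ b x) = nsmul' S₀ (a * b + a + b) x := by
  induction a with
  | zero => simp [nsmul']
  | succ a ih =>
    rw [nsmul'_succ', ih, nsmul'_add_nsmul']
    congr 1
    ring

theorem nsmul'_period {x : S₀} {a p : ℕ} (hp : nsmul' S₀ (a + p) x = nsmul' S₀ a x) :
    ∀ c, nsmul' S₀ (a + p + c) x = nsmul' S₀ (a + c) x := by
  intro c
  induction c with
  | zero => simpa using hp
  | succ c ih =>
    have h1 : a + p + (c + 1) = (a + p + c) + 1 := by omega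
    have h2 : a + (c + 1) = (a + c) + 1 := by omega
    rw [h1, h2, nsmul'_succ', nsmul'_succ', ih]

theorem nsmul'_period_mul {x : S₀} {a p : ℕ} (hp : nsmul' S₀ (a + p) x = nsmul' S₀ a x) :
    ∀ t, nsmul' S₀ (a + t * p) x = nsmul' S₀ a x := by
  intro t
  induction t with
  | zero => simp
  | succ t ih =>
    have h1 : a + (t + 1) * p = a + p + t * p := by ring
    rw [h1]
    have hp' : ∀ c, nsmul' S₀ (a + p + c) x = nsmul' S₀ (a + c) x := nsmul'_period hp
    rw [hp' (t * p), ih]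

theorem exists_idem_aux {x : S₀} {a b : ℕ} (hab : a < b)
    (heq : nsmul' S₀ a x = nsmul' S₀ b x) :
    {n : ℕ | nsmul' S₀ n x + nsmul' S₀ n x = nsmul' S₀ n x}.Nonempty := by
  set p := b - a with hpdef
  have hp1 : 1 ≤ p := by omega
  have hp : nsmul' S₀ (a + p) x = nsmul' S₀ a x := by
    have : a + p = b := by omega
    rw [this, heq]
  obtain ⟨q, hq1, hqdef⟩ : ∃ q, a + 1 ≤ q ∧ q = (a + 1) * p :=
    ⟨(a + 1) * p, Nat.le_mul_of_pos_right _ (by omega), rfl⟩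
  set n := q - 1 with hndef
  have hna : a ≤ n := by omega
  set c := n - a with hcdef
  have hnac : n = a + c := by omega
  have hp2 : nsmul' S₀ ((a + c) + p) x = nsmul' S₀ (a + c) x := by
    have h := nsmul'_period hp c
    have e : a + p + c = (a + c) + p := by omega
    rwa [e] at h
  refine ⟨n, ?_⟩
  simp only [Set.mem_setOf_eq]
  rw [nsmul'_add_nsmul']
  have h2 : n + n + 1 = (a + c) + (a + 1) * p := by
    rw [← hqdef]
    omega
  rw [h2, nsmul'_period_mul hp2 (a + 1), ← hnac]

theorem exists_idem {x : S₀} (h : IsPeriodicElem S₀ x) :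
    {n : ℕ | nsmul' S₀ n x + nsmul' S₀ n x = nsmul' S₀ n x}.Nonempty := by
  have hfin : Finite (cyc S₀ x) := h
  have : ¬ Function.Injective (fun n : ℕ => nsmul' S₀ n x) := by
    intro hinj
    have : Finite ℕ := Finite.of_injective
      (fun n : ℕ => (⟨nsmul' S₀ n x, Set.mem_range_self n⟩ : cyc S₀ x))
      (fun a b hab => hinj (congrArg Subtype.val hab))
    exact absurd this (by simp [Finite, not_finite_iff_infinite]; infer_instance)
  rw [Function.not_injective_iff] at this
  obtain ⟨a, b, heq, hne⟩ := this
  rcases Nat.lt_or_ge a b with hlt | hge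
  · exact exists_idem_aux hlt heq
  · exact exists_idem_aux (by omega) heq.symm

theorem eIdem_spec {x : S₀} (h : IsPeriodicElem S₀ x) :
    eIdem S₀ x + eIdem S₀ x = eIdem S₀ x :=
  Nat.sInf_mem (exists_idem h)

theorem nsmul'_of_idem {e : S₀} (he : e + e = e) : ∀ k, nsmul' S₀ k e = e := by
  intro k
  induction k with
  | zero => rfl
  | succ k ih => rw [nsmul'_succ', ih, he]

theorem idem_unique {z : S₀} {m n : ℕ}
    (hm : nsmul' S₀ m z + nsmul' S₀ m z = nsmul' S₀ m z)
    (hn : nsmul' S₀ n z + nsmul' S₀ n z = nsmul' S₀ n z) :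
    nsmul' S₀ m z = nsmul' S₀ n z := by
  have h1 : nsmul' S₀ m z = nsmul' S₀ n (nsmul' S₀ m z) := (nsmul'_of_idem hm n).symm
  have h2 : nsmul' S₀ m (nsmul' S₀ n z) = nsmul' S₀ n z := nsmul'_of_idem hn m
  rw [h1, nsmul'_nsmul', ← h2, nsmul'_nsmul']
  congr 1
  ring

theorem eIdem_add (hper : IsPeriodicSemigroup S₀) (x y : S₀) :
    eIdem S₀ (x + y) = eIdem S₀ x + eIdem S₀ y := by
  set m := sInf {n : ℕ | nsmul' S₀ n x + nsmul' S₀ n x = nsmul' S₀ n x} with hm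
  set n := sInf {n : ℕ | nsmul' S₀ n y + nsmul' S₀ n y = nsmul' S₀ n y} with hn
  have hxm : eIdem S₀ x + eIdem S₀ x = eIdem S₀ x := eIdem_spec (hper x)
  have hyn : eIdem S₀ y + eIdem S₀ y = eIdem S₀ y := eIdem_spec (hper y)
  have key : eIdem S₀ x + eIdem S₀ y = nsmul' S₀ (m * n + m + n) (x + y) := by
    have h1 : eIdem S₀ x = nsmul' S₀ n (eIdem S₀ x) := (nsmul'_of_idem hxm n).symm
    have h2 : eIdem S₀ y = nsmul' S₀ m (eIdem S₀ y) := (nsmul'_of_idem hyn m).symm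
    have hex : eIdem S₀ x = nsmul' S₀ m x := rfl
    have hey : eIdem S₀ y = nsmul' S₀ n y := rfl
    calc eIdem S₀ x + eIdem S₀ y
        = nsmul' S₀ n (nsmul' S₀ m x) + nsmul' S₀ m (nsmul' S₀ n y) := by
          rw [← hex, ← hey, ← h1, ← h2]
      _ = nsmul' S₀ (m * n + m + n) x + nsmul' S₀ (m * n + m + n) y := by
          rw [nsmul'_nsmul', nsmul'_nsmul']
          (congr 2; ring)
      _ = nsmul' S₀ (m * n + m + n) (x + y) := (nsmul'_add_dist _ _ _).symm
  have hidem : nsmul' S₀ (m * n + m + n) (x + y) + nsmul' S₀ (m * n + m + n) (x + y)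
      = nsmul' S₀ (m * n + m + n) (x + y) := by
    rw [← key, add_add_add_comm, hxm, hyn]
  have := idem_unique (z := x + y)
    (Nat.sInf_mem (exists_idem (hper (x + y)))) hidem
  rw [key]
  exact this

theorem sum_coe_exists (k : ℕ) (s : Fin (k + 1) → S₀) :
    ∃ y : S₀, ∑ i, (↑(s i) : WithZero S₀) = ↑y := by
  induction k with
  | zero => exact ⟨s 0, by simp⟩
  | succ k ih =>
    obtain ⟨y, hy⟩ := ih fun i => s i.succ
    exact ⟨s 0 + y, by rw [Fin.sum_univ_succ, hy, ← WithZero.coe_add]⟩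

end Aux

/-- `e(s_1 + ⋯ + s_k) = e(s_1) + ⋯ + e(s_k)` in a periodic commutative
semigroup. -/
theorem stmt11 (S : Type*) [AddCommSemigroup S] (hper : IsPeriodicSemigroup S)
    (k : ℕ) (s : Fin (k + 1) → S) (x : S)
    (hx : (x : WithZero S) = ∑ i, (↑(s i) : WithZero S)) :
    (↑(eIdem S x) : WithZero S) = ∑ i, (↑(eIdem S (s i)) : WithZero S) := by
  induction k generalizing x with
  | zero =>
    have h0 : ∀ g : Fin (0 + 1) → WithZero S, ∑ i, g i = g 0 := fun g => by
      rw [Fin.sum_univ_succ, Fin.sum_univ_zero, add_zero]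
    rw [h0] at hx
    rw [h0, WithZero.coe_inj.mp hx]
  | succ k ih =>
    obtain ⟨y, hy⟩ := sum_coe_exists k fun i => s i.succ
    have hx' : (x : WithZero S) = ↑(s 0 + y) := by
      rw [hx, Fin.sum_univ_succ, hy, WithZero.coe_add]
    rw [WithZero.coe_inj] at hx'
    rw [Fin.sum_univ_succ, ← ih (fun i => s i.succ) y hy.symm, hx',
      eIdem_add hper, WithZero.coe_add]

end ZS
end

section
/- Let S be a finite commutative semigroup. For any a ∈ S, the relative Davenport constant of the quotient semigroup satisfies D_{ā}(S/𝓗) ≤ ψ(a) + 1, where ā denotes the image of a under the canonical epimorphism of S onto S/𝓗. -/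
namespace ZS

variable (S : Type*) [AddCommSemigroup S]

/-!
Write an irreducible sequence over `S/𝓗` with sum `ā` as `c̄ T'`, where `T'` has sum `b̄`. Then
`a 𝓗 c + b ≼_𝓗 b`, and `b 𝓗 a` is impossible since `T'` would be a proper subsequence with
the same sum; so `a ≺_𝓗 b`. As `T'` is again irreducible, induction on the length produces a
strictly ascending chain above `a` of length `|T| - 1`.
-/

section

variable {S}

theorem gq_surjective : Function.Surjective (gq S) := fun y => Quotient.exists_rep y

theorem gq_eq_iff {x y : S} : gq S x = gq S y ↔ gEq S x y := AddCon.eq _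

theorem msum_cons (t : S) (T : Multiset S) : msum S (t ::ₘ T) = ↑t + msum S T := by
  simp [msum]

theorem msum_singleton (t : S) : msum S {t} = ↑t := by
  simp [msum]

theorem exists_msum_eq_coe {T : Multiset S} (hT : T ≠ 0) : ∃ y : S, msum S T = ↑y := by
  induction T using Multiset.induction with
  | empty => exact absurd rfl hT
  | cons t T ih =>
    rcases eq_or_ne T 0 with rfl | hT0
    · exact ⟨t, msum_singleton t⟩
    · obtain ⟨y, hy⟩ := ih hT0
      exact ⟨t + y, by rw [msum_cons, hy]; rfl⟩

theorem IsReducible.cons {T : Multiset S} (t : S) (h : IsReducible S T) :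
    IsReducible S (t ::ₘ T) := by
  rcases h with ⟨T', hle, hne, hT'0, hsum⟩ | ⟨hT0, z, hz, hzero⟩
  · exact Or.inl ⟨t ::ₘ T', Multiset.cons_le_cons t hle,
      fun h => hne (Multiset.cons_inj_right t |>.mp h), Multiset.cons_ne_zero,
      by rw [msum_cons, msum_cons, hsum]⟩
  · refine Or.inl ⟨{t}, Multiset.cons_le_cons t (Multiset.zero_le T), ?_, by simp, ?_⟩
    · exact fun h => hT0 (Multiset.cons_inj_right t |>.mp h).symm
    · rw [msum_singleton, msum_cons, hz, ← WithZero.coe_add, add_comm, hzero]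

theorem exists_gLt_of_not_isReducible_cons {a : S} {t : GQuot S} {T : Multiset (GQuot S)}
    (hT : T ≠ 0) (hirr : ¬ IsReducible (GQuot S) (t ::ₘ T))
    (hsum : msum (GQuot S) (t ::ₘ T) = ↑(gq S a)) :
    ∃ b : S, msum (GQuot S) T = ↑(gq S b) ∧ gLt S a b := by
  obtain ⟨y, hy⟩ := exists_msum_eq_coe hT
  obtain ⟨b, rfl⟩ := gq_surjective y
  obtain ⟨c, rfl⟩ := gq_surjective t
  have hab : gEq S (c + b) a := gq_eq_iff.mp <| WithZero.coe_inj.mp <| by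
    rw [← hsum, msum_cons, hy]; rfl
  have hle : gLe S a b := gLe_trans S hab.2 (Or.inr ⟨c, add_comm c b⟩)
  refine ⟨b, hy, hle, fun hba => hirr ?_⟩
  have hb : gq S b = gq S a := gq_eq_iff.mpr ⟨hba, hle⟩
  refine Or.inl ⟨T, Multiset.le_cons_self T _, fun h => ?_, hT, by rw [hy, hsum, hb]⟩
  simpa using congrArg Multiset.card h

theorem exists_gLt_chain_cons {a b : S} {ℓ : ℕ} (hab : gLt S a b)
    (hb : ∃ c : ℕ → S, c 0 = b ∧ ∀ i < ℓ, gLt S (c i) (c (i + 1))) :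
    ∃ c : ℕ → S, c 0 = a ∧ ∀ i < ℓ + 1, gLt S (c i) (c (i + 1)) := by
  obtain ⟨c, rfl, hc⟩ := hb
  refine ⟨fun | 0 => a | i + 1 => c i, rfl, fun i hi => ?_⟩
  rcases i with _ | i
  · exact hab
  · exact hc i (by omega)

theorem exists_gLt_chain_of_not_isReducible (ℓ : ℕ) {a : S} {T : Multiset (GQuot S)}
    (hcard : T.card = ℓ + 1) (hirr : ¬ IsReducible (GQuot S) T)
    (hsum : msum (GQuot S) T = ↑(gq S a)) :
    ∃ c : ℕ → S, c 0 = a ∧ ∀ i < ℓ, gLt S (c i) (c (i + 1)) := by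
  induction ℓ generalizing a T with
  | zero => exact ⟨fun _ => a, rfl, fun i hi => absurd hi (Nat.not_lt_zero i)⟩
  | succ ℓ ih =>
    obtain ⟨t, ht⟩ := Multiset.card_pos_iff_exists_mem.mp (by omega : 0 < T.card)
    obtain ⟨T, rfl⟩ := Multiset.exists_cons_of_mem ht
    have hcard' : T.card = ℓ + 1 := by simpa using hcard
    obtain ⟨b, hb, hab⟩ :=
      exists_gLt_of_not_isReducible_cons (Multiset.card_pos.mp (by omega)) hirr hsum
    exact exists_gLt_chain_cons hab (ih hcard' (fun h => hirr (h.cons t)) hb)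

theorem le_psi_of_chain {a : S} {ℓ : ℕ} (c : ℕ → S) (hc0 : c 0 = a)
    (hc : ∀ i < ℓ, gLt S (c i) (c (i + 1))) : (ℓ : ℕ∞) ≤ psi S a :=
  le_sSup ⟨ℓ, rfl, c, hc0, hc⟩

end

theorem stmt12_general (S : Type*) [AddCommSemigroup S] (a : S) :
    Drel (GQuot S) (gq S a) ≤ psi S a + 1 := by
  refine sSup_le ?_
  rintro n ⟨T, hT0, hirr, hsum, rfl⟩
  obtain ⟨ℓ, hℓ⟩ := Nat.exists_eq_add_one.mpr (Multiset.card_pos.mpr hT0)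
  obtain ⟨c, hc0, hc⟩ := exists_gLt_chain_of_not_isReducible ℓ hℓ hirr hsum
  rw [hℓ, Nat.cast_succ]
  gcongr
  exact le_psi_of_chain c hc0 hc

/-- `D_ā(S/𝓗) ≤ ψ(a) + 1`. -/
theorem stmt12 (S : Type*) [AddCommSemigroup S] [Fintype S] [Nonempty S] (a : S) :
    Drel (GQuot S) (gq S a) ≤ psi S a + 1 :=
  stmt12_general S a

end ZS
end

section
/- Let S be a finite commutative semigroup with exp(S) = n, and let a ∈ S be such that St(H_a) ≠ ∅. Then the exponent of the Schützenberger group Γ(H_a) divides n; consequently, if K is a splitting field of S, then K is also a splitting field of the group Γ(H_a). -/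
namespace ZS

variable (S : Type*) [AddCommSemigroup S]

open Polynomial in
set_option maxHeartbeats 800000 in
theorem aux_split {K : Type*} [Field K] {m n : ℕ} (hm : 0 < m) (hn : 0 < n) (hmn : m ∣ n)
    (h : Set.ncard {ζ : K | ζ ^ n = 1} = n) : Set.ncard {ζ : K | ζ ^ m = 1} = m := by
  classical
  obtain ⟨q, rfl⟩ := hmn
  have hq : 0 < q := Nat.pos_of_ne_zero (by rintro rfl; simp at hn)
  have hfinA : {ζ : K | ζ ^ (m * q) = 1}.Finite := by
    apply Set.Finite.subset (nthRoots (m * q) (1 : K)).toFinset.finite_toSet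
    intro z hz
    exact Multiset.mem_toFinset.2 ((mem_nthRoots hn).2 hz)
  have hfinB : {ζ : K | ζ ^ m = 1}.Finite := by
    apply Set.Finite.subset (nthRoots m (1 : K)).toFinset.finite_toSet
    intro z hz
    exact Multiset.mem_toFinset.2 ((mem_nthRoots hm).2 hz)
  set A := hfinA.toFinset with hA
  set B := hfinB.toFinset with hB
  have hmemA : ∀ z : K, z ∈ A ↔ z ^ (m * q) = 1 := fun z => by simp [hA]
  have hmemB : ∀ z : K, z ∈ B ↔ z ^ m = 1 := fun z => by simp [hB]
  have hcardA : A.card = m * q := by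
    rw [← h, Set.ncard_eq_toFinset_card _ hfinA]
  have hBle : B.card ≤ m := by
    have hsub : B ⊆ (nthRoots m (1 : K)).toFinset := fun z hz =>
      Multiset.mem_toFinset.2 ((mem_nthRoots hm).2 ((hmemB z).1 hz))
    calc B.card ≤ (nthRoots m (1 : K)).toFinset.card := Finset.card_le_card hsub
      _ ≤ Multiset.card (nthRoots m (1 : K)) := Multiset.toFinset_card_le _
      _ ≤ m := card_nthRoots m 1
  have hmap : ∀ z ∈ A, z ^ q ∈ B := by
    intro z hz
    rw [hmemB, ← pow_mul, mul_comm q m]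
    exact (hmemA z).1 hz
  have hsum := Finset.card_eq_sum_card_fiberwise hmap
  have hfib : ∀ b ∈ B, (A.filter fun z => z ^ q = b).card ≤ q := by
    intro b _
    have hsub : (A.filter fun z => z ^ q = b) ⊆ (nthRoots q b).toFinset := by
      intro z hz
      exact Multiset.mem_toFinset.2 ((mem_nthRoots hq).2 (Finset.mem_filter.1 hz).2)
    calc (A.filter fun z => z ^ q = b).card ≤ (nthRoots q b).toFinset.card :=
        Finset.card_le_card hsub
      _ ≤ Multiset.card (nthRoots q b) := Multiset.toFinset_card_le _
      _ ≤ q := card_nthRoots q b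
  have hle : m * q ≤ B.card * q := by
    calc m * q = A.card := hcardA.symm
      _ = ∑ b ∈ B, (A.filter fun z => z ^ q = b).card := hsum
      _ ≤ ∑ _b ∈ B, q := Finset.sum_le_sum hfib
      _ = B.card * q := by rw [Finset.sum_const, smul_eq_mul]
  have hmB : m ≤ B.card := Nat.le_of_mul_le_mul_right hle hq
  rw [Set.ncard_eq_toFinset_card _ hfinB, ← hB]
  omega

/-- Periodicity at a base index propagates to all larger base indices. -/
theorem aux_nsmul'_shift {T : Type*} [AddCommSemigroup T] (x : T) {m k : ℕ}
    (h : nsmul' T (m + k) x = nsmul' T m x) (j : ℕ) :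
    nsmul' T (m + j + k) x = nsmul' T (m + j) x := by
  induction j with
  | zero => simpa using h
  | succ i ih =>
      have h1 : m + (i + 1) + k = (m + i + k) + 1 := by omega
      have h2 : m + (i + 1) = (m + i) + 1 := by omega
      rw [h1, h2]
      show x + nsmul' T (m + i + k) x = x + nsmul' T (m + i) x
      rw [ih]

/-- The period of an element divides any eventual period. -/
theorem aux_period_dvd {T : Type*} [AddCommSemigroup T] (x : T)
    {k : ℕ} (hk : 0 < k) {m : ℕ} (h : nsmul' T (m + k) x = nsmul' T m x) :
    period T x ∣ k := by
  set P : Set ℕ := {n : ℕ | 0 < n ∧ ∃ m : ℕ, nsmul' T (m + n) x = nsmul' T m x} with hP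
  have hne : P.Nonempty := ⟨k, hk, m, h⟩
  obtain ⟨hp0, m0, hm0⟩ := Nat.sInf_mem hne
  have hper : period T x = sInf P := rfl
  have key : ∀ k : ℕ, 0 < k → (∃ m : ℕ, nsmul' T (m + k) x = nsmul' T m x) → sInf P ∣ k := by
    intro k
    induction k using Nat.strong_induction_on with
    | _ k IH =>
      intro hk ⟨m1, hm1⟩
      have hle : sInf P ≤ k := Nat.sInf_le ⟨hk, m1, hm1⟩
      rcases eq_or_lt_of_le hle with heq | hlt
      · exact heq ▸ dvd_refl _
      · set p := sInf P with hp
        have h1 : nsmul' T (m0 + (m1 + (k - p)) + p) x = nsmul' T (m0 + (m1 + (k - p))) x :=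
          aux_nsmul'_shift x hm0 (m1 + (k - p))
        have h2 : nsmul' T (m1 + (m0 + 0) + k) x = nsmul' T (m1 + (m0 + 0)) x :=
          aux_nsmul'_shift x hm1 (m0 + 0)
        have e1 : m0 + (m1 + (k - p)) + p = m1 + (m0 + 0) + k := by omega
        have e2 : m0 + (m1 + (k - p)) = (m0 + m1) + (k - p) := by omega
        have e3 : m1 + (m0 + 0) = m0 + m1 := by omega
        rw [e1, h2, e3] at h1
        rw [e2] at h1
        have hsub : p ∣ k - p := IH (k - p) (by omega) (by omega) ⟨m0 + m1, h1.symm⟩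
        have : p ∣ (k - p) + p := Dvd.dvd.add hsub (dvd_refl p)
        have e4 : (k - p) + p = k := by omega
        rwa [e4] at this
  rw [hper]
  exact key k hk ⟨m, h⟩

/-- In a finite semigroup every element is eventually periodic. -/
theorem aux_exists_period {T : Type*} [AddCommSemigroup T] [Finite T] (x : T) :
    ∃ k m : ℕ, 0 < k ∧ nsmul' T (m + k) x = nsmul' T m x := by
  obtain ⟨i, j, hne, heq⟩ := Finite.exists_ne_map_eq_of_infinite (fun n : ℕ => nsmul' T n x)
  rcases Nat.lt_or_ge i j with hlt | hge
  · refine ⟨j - i, i, by omega, ?_⟩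
    have : i + (j - i) = j := by omega
    rw [this]; exact heq.symm
  · have hlt : j < i := by omega
    refine ⟨i - j, j, by omega, ?_⟩
    have : j + (i - j) = i := by omega
    rw [this]; exact heq

/-- The period of an element of a finite semigroup is positive and is attained. -/
theorem aux_period_mem {T : Type*} [AddCommSemigroup T] [Finite T] (x : T) :
    0 < period T x ∧ ∃ m : ℕ, nsmul' T (m + period T x) x = nsmul' T m x := by
  obtain ⟨k, m, hk, h⟩ := aux_exists_period (T := T) x
  exact Nat.sInf_mem (⟨k, hk, m, h⟩ :
    Set.Nonempty {n : ℕ | 0 < n ∧ ∃ m : ℕ, nsmul' T (m + n) x = nsmul' T m x})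

/-- The action of iterated sums of a Schützenberger map. -/
theorem aux_nsmul'_gamma (S : Type*) [AddCommSemigroup S] (a : S) (γ : Gamma S a)
    (c : S) (hγ : ∀ x : ↥(HClass S a), (↑(γ.1 x) : S) = c + ↑x) (k : ℕ)
    (x : ↥(HClass S a)) :
    (↑((nsmul' (Gamma S a) k γ).1 x) : S) = nsmul' S k c + ↑x := by
  induction k with
  | zero => exact hγ x
  | succ i ih =>
      show (↑(γ.1 ((nsmul' (Gamma S a) i γ).1 x)) : S) = (c + nsmul' S i c) + ↑x
      rw [hγ, ih, add_assoc]

/-- If `n` is a positive common multiple of all periods, then `expS` divides `n`. -/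
theorem aux_expS_dvd {T : Type*} [AddCommSemigroup T] {n : ℕ} (hn : 0 < n)
    (h : ∀ x : T, period T x ∣ n) : expS T ∣ n := by
  set Q : Set ℕ := {m : ℕ | 0 < m ∧ ∀ x : T, period T x ∣ m} with hQ
  have hnQ : n ∈ Q := ⟨hn, h⟩
  have hd := Nat.sInf_mem (⟨n, hnQ⟩ : Q.Nonempty)
  have hexp : expS T = sInf Q := rfl
  set d := sInf Q with hdd
  have hgQ : Nat.gcd d n ∈ Q :=
    ⟨Nat.gcd_pos_of_pos_right d hn, fun x => Nat.dvd_gcd (hd.2 x) (h x)⟩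
  have h1 : d ≤ Nat.gcd d n := Nat.sInf_le hgQ
  have h2 : Nat.gcd d n ≤ d := Nat.le_of_dvd hd.1 (Nat.gcd_dvd_left d n)
  have : Nat.gcd d n = d := le_antisymm h2 h1
  rw [hexp, ← this]
  exact Nat.gcd_dvd_right d n

/-- the exponent of the Schützenberger group divides `exp(S)`, and splitting
fields of `S` are splitting fields of `Γ(H_a)`. -/
theorem stmt13 (S : Type*) [AddCommSemigroup S] [Fintype S] [Nonempty S]
    (n : ℕ) (hn : expS S = n)
    (a : S) (hst : (stab S a).Nonempty)
    (K : Type*) [Field K] :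
    expS (Gamma S a) ∣ n ∧
    (SplitField K n → SplitField K (expS (Gamma S a))) := by
  have hNdvd : ∀ x : S, period S x ∣ ∏ y : S, period S y := fun x =>
    Finset.dvd_prod_of_mem _ (Finset.mem_univ x)
  have hNpos : 0 < ∏ y : S, period S y :=
    Finset.prod_pos fun x _ => (aux_period_mem x).1
  have hmemS : expS S ∈ {m : ℕ | 0 < m ∧ ∀ x : S, period S x ∣ m} :=
    Nat.sInf_mem ⟨∏ y : S, period S y, hNpos, hNdvd⟩
  rw [hn] at hmemS
  obtain ⟨hnpos, hdvd⟩ := hmemS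
  have hγ : ∀ γ : Gamma S a, period (Gamma S a) γ ∣ n := by
    intro γ
    obtain ⟨c, hc, hfc⟩ := γ.2
    obtain ⟨hp, m, hm⟩ := aux_period_mem (T := S) c
    have heqΓ : nsmul' (Gamma S a) (m + period S c) γ = nsmul' (Gamma S a) m γ := by
      apply Subtype.ext
      funext x
      apply Subtype.ext
      rw [aux_nsmul'_gamma S a γ c hfc, aux_nsmul'_gamma S a γ c hfc, hm]
    exact dvd_trans (aux_period_dvd γ hp heqΓ) (hdvd c)
  have hdiv : expS (Gamma S a) ∣ n := aux_expS_dvd hnpos hγ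
  have hmem : expS (Gamma S a) ∈
      {m : ℕ | 0 < m ∧ ∀ γ : Gamma S a, period (Gamma S a) γ ∣ m} :=
    Nat.sInf_mem ⟨n, hnpos, hγ⟩
  exact ⟨hdiv, fun hK => aux_split hmem.1 hnpos hdiv hK⟩

end ZS
end

section
/- Let S be a commutative semigroup and s ∈ S with St(H_s) ≠ ∅, and let V = {x ∈ S : x ≼_𝓗 s}. Then setting γ_a ∘ x = a + x for a ∈ St(H_s) and x ∈ V gives a well-defined action of the Schützenberger group Γ(H_s) on the set V; that is, the identity element of Γ(H_s) fixes every x ∈ V, and (γ_α + γ_β) ∘ x = γ_α ∘ (γ_β ∘ x) for all α, β ∈ St(H_s) and x ∈ V. -/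
namespace ZS

variable (S : Type*) [AddCommSemigroup S]

/-- (the Schützenberger group `Γ(H_s)` acts on `V = {x : x ≼_𝓗 s}` by
`γ_a ∘ x = a + x`: the action is well defined, the identity of `Γ(H_s)` fixes every point of
`V`, and the action is compatible with the group operation). -/
theorem stmt14 (S : Type*) [AddCommSemigroup S] (s : S) (hst : (stab S s).Nonempty) :
    (∀ α ∈ stab S s, ∀ β ∈ stab S s,
      (∀ h ∈ HClass S s, α + h = β + h) →
        ∀ x ∈ {x : S | gLe S x s}, α + x = β + x) ∧
    (∀ ε ∈ stab S s, (∀ h ∈ HClass S s, ε + h = h) →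
        ∀ x ∈ {x : S | gLe S x s}, ε + x = x) ∧
    (∀ α ∈ stab S s, ∀ β ∈ stab S s, ∀ x ∈ {x : S | gLe S x s},
        (α + β) + x = α + (β + x)) := by
  refine ⟨?_, ?_, fun α _ β _ x _ => add_assoc α β x⟩
  · intro α hα β hβ hagree x hx
    have hs : s ∈ HClass S s := ⟨Or.inl rfl, Or.inl rfl⟩
    have h1 := hagree s hs
    rcases hx with rfl | ⟨c, rfl⟩
    · exact h1
    · rw [← add_assoc, ← add_assoc, h1]
  · intro ε hε hfix x hx
    have hs : s ∈ HClass S s := ⟨Or.inl rfl, Or.inl rfl⟩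
    have h1 := hfix s hs
    rcases hx with rfl | ⟨c, rfl⟩
    · exact h1
    · rw [← add_assoc, h1]

end ZS
end

section
/- A finite commutative semigroup S is archimedean if and only if S has exactly one idempotent. -/
namespace ZS

variable (S : Type*) [AddCommSemigroup S]

theorem nsmul'_add' (x : S) (m n : ℕ) :
    nsmul' S (m + n + 1) x = nsmul' S m x + nsmul' S n x := by
  induction m with
  | zero => simp [nsmul']
  | succ k ih =>
      have : k + 1 + n + 1 = (k + n + 1) + 1 := by omega
      rw [this]
      show x + nsmul' S (k + n + 1) x = (x + nsmul' S k x) + nsmul' S n x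
      rw [ih, add_assoc]

theorem nsmul'_step (x : S) {i p : ℕ} (h : nsmul' S i x = nsmul' S (i + p) x) (t : ℕ) :
    nsmul' S (i + t) x = nsmul' S (i + t + p) x := by
  cases t with
  | zero => simpa using h
  | succ s =>
      have h1 : i + (s + 1) = s + i + 1 := by omega
      have h2 : s + i + 1 + p = s + (i + p) + 1 := by omega
      rw [h1, h2, nsmul'_add', nsmul'_add', h]

theorem nsmul'_mul_step (x : S) {i p : ℕ} (h : nsmul' S i x = nsmul' S (i + p) x)
    (t : ℕ) : ∀ k : ℕ, nsmul' S (i + t) x = nsmul' S (i + t + k * p) x := by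
  intro k
  induction k with
  | zero => simp
  | succ m ih =>
      have : i + t + (m + 1) * p = i + (t + m * p) + p := by ring
      rw [this, ← nsmul'_step S x h (t + m * p)]
      have : i + (t + m * p) = i + t + m * p := by omega
      rw [this, ← ih]

theorem exists_idem_pow [Finite S] (x : S) :
    ∃ n : ℕ, nsmul' S n x + nsmul' S n x = nsmul' S n x := by
  obtain ⟨a, b, hab, heq⟩ := Finite.exists_ne_map_eq_of_infinite (fun n : ℕ => nsmul' S n x)
  wlog hlt : a < b generalizing a b
  · exact this b a hab.symm heq.symm (by omega)
  set i := a
  set p := b - a with hp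
  have hp0 : 0 < p := by omega
  have h : nsmul' S i x = nsmul' S (i + p) x := by
    have : i + p = b := by omega
    rw [this]; exact heq
  set m := (i + 1) * p - 1 with hm
  have h3 : i + 1 ≤ (i + 1) * p := Nat.le_mul_of_pos_right _ hp0
  have hmi : i ≤ m := by omega
  refine ⟨m, ?_⟩
  have key : nsmul' S m x + nsmul' S m x = nsmul' S (m + m + 1) x := (nsmul'_add' S x m m).symm
  rw [key]
  have h2 : m + m + 1 = i + (m - i) + (i + 1) * p := by
    have : m + 1 = (i + 1) * p := by omega
    omega
  rw [h2, ← nsmul'_mul_step S x h (m - i) (i + 1)]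
  congr 1
  omega

theorem nsmul'_of_idem_s17 {e : S} (he : e + e = e) (n : ℕ) : nsmul' S n e = e := by
  induction n with
  | zero => rfl
  | succ k ih => show e + nsmul' S k e = e; rw [ih, he]

/-- a finite commutative semigroup is archimedean iff it has exactly one
idempotent. -/
theorem stmt17 (S : Type*) [AddCommSemigroup S] [Fintype S] [Nonempty S] :
    (∀ a b : S, ∃ n : ℕ, ∃ t : S, nsmul' S n a = t + b) ↔ (∃! e : S, e + e = e) := by
  constructor
  · intro harch
    obtain ⟨x⟩ := ‹Nonempty S›
    obtain ⟨n, hn⟩ := exists_idem_pow S x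
    refine ⟨nsmul' S n x, hn, ?_⟩
    intro f hf
    set e := nsmul' S n x with he'
    have key : ∀ u v : S, u + u = u → v + v = v → u = u + v := by
      intro u v hu hv
      obtain ⟨k, t, hk⟩ := harch u v
      have hku : nsmul' S k u = u := nsmul'_of_idem_s17 S hu k
      rw [hku] at hk
      calc u = t + v := hk
        _ = t + (v + v) := by rw [hv]
        _ = (t + v) + v := by rw [add_assoc]
        _ = u + v := by rw [← hk]
    have h1 : f = f + e := key f e hf hn
    have h2 : e = e + f := key e f hn hf
    rw [h1, add_comm, ← h2]
  · rintro ⟨e, he, hun⟩ a b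
    obtain ⟨n, hn⟩ := exists_idem_pow S a
    obtain ⟨m, hm⟩ := exists_idem_pow S b
    have hna : nsmul' S n a = e := hun _ hn
    have hmb : nsmul' S m b = e := hun _ hm
    cases m with
    | zero =>
        refine ⟨n, e, ?_⟩
        have : (b : S) = e := hmb
        rw [hna, ← this]
        exact (this ▸ he).symm
    | succ k =>
        refine ⟨n, e + nsmul' S k b, ?_⟩
        have : nsmul' S (k + 1) b = nsmul' S k b + b := by
          show b + nsmul' S k b = _
          rw [add_comm]
        rw [hna, add_assoc, ← this, hmb, he]


end ZS
end
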